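/- In any labelled transition system, if s ~ t and s →a s', then either a = τ and the transition s →a s' is not class-changing (in which case s' ~ t), or there is a path t = t₀ →τ t₁ →τ ⋯ →τ t_k →a t' (k ≥ 0) such that no transition in the segment t₀ →τ t₁ →τ ⋯ →τ t_k is class-changing (hence t = t₀ ~ t₁ ~ ⋯ ~ t_k) and s' ~ t'; moreover in the latter case the transition t_k →a t' is class-changing if and only if s →a s' is class-changing. -/
import Mathlib


/-! Common definitions: labelled transition systems, branching bisimulation,
branching bisimilarity, silent states, class-change norm, BPA systems,
right-to-left finite transducers. -/

/-- A τ-path `t = t₀ →τ t₁ →τ ⋯ →τ t_k` in which every state after `t₀`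
is related to `s` by `B`. -/
inductive TauSeq {S Act : Type} (tr : S → Act → S → Prop) (τ : Act)
    (B : S → S → Prop) (s : S) : S → S → Prop
  | refl (t : S) : TauSeq tr τ B s t t
  | step {t t' t'' : S} : tr t τ t' → B s t' → TauSeq tr τ B s t' t'' →
      TauSeq tr τ B s t t''

/-- `B` is a branching bisimulation in the LTS given by `tr` with silent action `τ`. -/
def IsBranchingBisim {S Act : Type} (tr : S → Act → S → Prop) (τ : Act)
    (B : S → S → Prop) : Prop :=
  ∀ s t, B s t →
    (∀ a s', tr s a s' →
      ((a = τ ∧ B s' t) ∨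
        ∃ tk t', TauSeq tr τ B s t tk ∧ tr tk a t' ∧ B s' t')) ∧
    (∀ a t', tr t a t' →
      ((a = τ ∧ B s t') ∨
        ∃ sk s', TauSeq tr τ (fun u v => B v u) t s sk ∧ tr sk a s' ∧ B s' t'))

/-- Branching bisimilarity: `s ~ t` iff some branching bisimulation contains `(s,t)`. -/
def BBisim {S Act : Type} (tr : S → Act → S → Prop) (τ : Act) (s t : S) : Prop :=
  ∃ B, IsBranchingBisim tr τ B ∧ B s t

/-- `Steps tr s w t`: there is a path from `s` to `t` labelled by the word `w`. -/
inductive Steps {S Act : Type} (tr : S → Act → S → Prop) : S → List Act → S → Prop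
  | refl (s : S) : Steps tr s [] s
  | step {s : S} {a : Act} {s' : S} {w : List Act} {t : S} :
      tr s a s' → Steps tr s' w t → Steps tr s (a :: w) t

/-- A state is silent if only τ-labelled words can be performed from it. -/
def SilentState {S Act : Type} (tr : S → Act → S → Prop) (τ : Act) (s : S) : Prop :=
  ∀ w s', Steps tr s w s' → ∀ a ∈ w, a = τ

/-- A τ-path in which no transition is class-changing (each step stays in the same
`~`-class). -/
inductive TauNC {S Act : Type} (tr : S → Act → S → Prop) (τ : Act) : S → S → Prop
  | refl (t : S) : TauNC tr τ t t
  | step {t t' t'' : S} : tr t τ t' → BBisim tr τ t t' → TauNC tr τ t' t'' →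
      TauNC tr τ t t''

/-- `CCPath tr τ s n t`: there is a path from `s` to `t` containing exactly `n`
class-changing transitions. -/
inductive CCPath {S Act : Type} (tr : S → Act → S → Prop) (τ : Act) : S → ℕ → S → Prop
  | refl (s : S) : CCPath tr τ s 0 s
  | stepEq {s : S} {a : Act} {s' : S} {n : ℕ} {t : S} :
      tr s a s' → BBisim tr τ s s' → CCPath tr τ s' n t → CCPath tr τ s n t
  | stepNe {s : S} {a : Act} {s' : S} {n : ℕ} {t : S} :
      tr s a s' → ¬ BBisim tr τ s s' → CCPath tr τ s' n t → CCPath tr τ s (n + 1) t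

/-- The class-change norm: the least number of class-changing transitions on a path
to a silent state; `⊤` (ω) if no silent state is reachable. -/
noncomputable def ccNorm {S Act : Type} (tr : S → Act → S → Prop) (τ : Act) (s : S) : ℕ∞ :=
  sInf {n : ℕ∞ | ∃ ℓ : ℕ, n = (ℓ : ℕ∞) ∧ ∃ t, CCPath tr τ s ℓ t ∧ SilentState tr τ t}

/-- A BPA system: a finite set of rules `A →a α` (a context-free grammar in
Greibach normal form, no starting variable). -/
structure BPA (V Act : Type) where
  rules : Finset (V × Act × List V)

/-- The transition relation of the LTS `L_G` associated with a BPA system `G`: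
`Aβ →a γβ` whenever `A →a γ` is a rule. -/
def BPA.tr {V Act : Type} (G : BPA V Act) : List V → Act → List V → Prop :=
  fun s a t => ∃ (A : V) (γ β : List V), (A, a, γ) ∈ G.rules ∧ s = A :: β ∧ t = γ ++ β

/-- The (standard, syntactic) norm of a process: the length of a shortest word
leading to the empty process; `⊤` (ω) if there is none. -/
noncomputable def BPA.norm {V Act : Type} (G : BPA V Act) (α : List V) : ℕ∞ :=
  sInf {n : ℕ∞ | ∃ w : List Act, n = (w.length : ℕ∞) ∧ Steps G.tr α w []}

/-- A BPA system is normed if every variable has a finite norm. -/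
def BPA.Normed {V Act : Type} (G : BPA V Act) : Prop :=
  ∀ A : V, G.norm [A] ≠ ⊤

/-- The transition relation of `L_{G,R}`: as `L_G`, but all outgoing transitions of
states in `R*` are removed. -/
def BPA.trR {V Act : Type} (G : BPA V Act) (R : Set V) : List V → Act → List V → Prop :=
  fun s a t => G.tr s a t ∧ ¬ (∀ X ∈ s, X ∈ R)

/-- `R_γ`: the set of variables redundant w.r.t. `γ`, i.e. those `X` with `Xγ ~ γ`. -/
def RedSet {V Act : Type} (G : BPA V Act) (τ : Act) (γ : List V) : Set V :=
  {X : V | BBisim G.tr τ (X :: γ) γ}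

/-- `α` is a redundancy-free prefix of `αγ`: it cannot be written as `δXβ` with
`Xβγ ~ βγ`. -/
def RedFreePrefix {V Act : Type} (G : BPA V Act) (τ : Act) (α γ : List V) : Prop :=
  ¬ ∃ (δ : List V) (X : V) (β : List V),
      α = δ ++ X :: β ∧ BBisim G.tr τ (X :: (β ++ γ)) (β ++ γ)

/-- A finite-state transducer reading (and writing) from right to left. -/
structure Transducer (Q V : Type) where
  delta : Q → V → Q × List V
  q0 : Q

/-- Running the transducer on an input string, right to left:
`T.run α q = (q', β)` means `q' ⇐α|β= q`. -/
def Transducer.run {Q V : Type} (T : Transducer Q V) : List V → Q → Q × List V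
  | [], q => (q, [])
  | A :: α, q =>
      let p := T.run α q
      ((T.delta p.1 A).1, (T.delta p.1 A).2 ++ p.2)

/-- `T_q(α)`: the output of `T` on input `α`, started in state `q`. -/
def Transducer.out {Q V : Type} (T : Transducer Q V) (q : Q) (α : List V) : List V :=
  (T.run α q).2

/-- `q`-normal forms: `ε ∈ NF_q`, and `αA ∈ NF_q` iff `A` is a `q`-prime and
`α` is a `q'`-normal form where `q' ⇐A|A= q`. -/
inductive Transducer.NF {Q V : Type} (T : Transducer Q V) : Q → List V → Prop
  | nil (q : Q) : Transducer.NF T q []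
  | snoc {q : Q} {A : V} {α : List V} :
      (T.delta q A).2 = [A] → Transducer.NF T (T.delta q A).1 α →
      Transducer.NF T q (α ++ [A])

/-- A normal-form-computing (nfc) transducer: each `T_q(A)` is a `q`-normal form,
and `q' ⇐A|γ= q` implies `q' ⇐γ|γ= q`. -/
def Transducer.IsNFC {Q V : Type} (T : Transducer Q V) : Prop :=
  ∀ (q : Q) (A : V),
    Transducer.NF T q (T.delta q A).2 ∧ T.run (T.delta q A).2 q = T.delta q A

/-- A τ-path in `L_G` along which the `T_q`-output stays constant. -/
inductive ConstTauSeq {Q V Act : Type} (tr : List V → Act → List V → Prop) (τ : Act)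
    (T : Transducer Q V) (q : Q) : List V → List V → Prop
  | refl (α : List V) : ConstTauSeq tr τ T q α α
  | step {α α' α'' : List V} : tr α τ α' → T.out q α' = T.out q α →
      ConstTauSeq tr τ T q α' α'' → ConstTauSeq tr τ T q α α''

/-- The long move `α ⇒a_q β`. -/
def BigStep {Q V Act : Type} (G : BPA V Act) (τ : Act) (T : Transducer Q V) (q : Q)
    (α : List V) (a : Act) (β : List V) : Prop :=
  (a = τ ∧ β = T.out q α) ∨
  ∃ αk β', ConstTauSeq G.tr τ T q α αk ∧ G.tr αk a β' ∧ β = T.out q β'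

/-- The equivalence `α₁ ≈_q α₂`: the same long moves are available. -/
def TApprox {Q V Act : Type} (G : BPA V Act) (τ : Act) (T : Transducer Q V) (q : Q)
    (α₁ α₂ : List V) : Prop :=
  ∀ a β, BigStep G τ T q α₁ a β ↔ BigStep G τ T q α₂ a β

/-- Consistency of an nfc-transducer with a BPA system (Definition 4.1). -/
def ConsistentWith {Q V Act : Type} (T : Transducer Q V) (G : BPA V Act) (τ : Act) : Prop :=
  (∀ A : V, T.out T.q0 [A] = [] → TApprox G τ T T.q0 [A] []) ∧
  (∀ (q : Q) (A : V), T.out q [A] ≠ [] → TApprox G τ T q [A] (T.out q [A])) ∧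
  (∀ (q : Q) (A C : V), T.out q [A, C] = [C] → T.out q [C] = [C] →
    TApprox G τ T q [A, C] [C])

section Aux

variable {S Act : Type} {tr : S → Act → S → Prop} {τ : Act}

lemma tauSeq_mono {B C : S → S → Prop} {s s' : S} (h : ∀ v, B s v → C s' v) :
    ∀ {t t' : S}, TauSeq tr τ B s t t' → TauSeq tr τ C s' t t' := by
  intro t t' hseq
  induction hseq with
  | refl t => exact TauSeq.refl t
  | step h1 h2 _ ih => exact TauSeq.step h1 (h _ h2) ih

lemma tauSeq_append {B : S → S → Prop} {s t t' t'' : S}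
    (h1 : TauSeq tr τ B s t t') (h2 : TauSeq tr τ B s t' t'') :
    TauSeq tr τ B s t t'' := by
  revert h2
  induction h1 with
  | refl => exact fun h2 => h2
  | step ha hb _ ih => exact fun h2 => TauSeq.step ha hb (ih h2)

lemma tauSeq_last {B : S → S → Prop} {s t t' : S}
    (h0 : B s t) (h : TauSeq tr τ B s t t') : B s t' := by
  revert h0
  induction h with
  | refl => exact fun h0 => h0
  | step _ hb _ ih => exact fun _ => ih hb

lemma tauSeq_split_last {B : S → S → Prop} {s t t' : S} (h : TauSeq tr τ B s t t') :
    t = t' ∨ ∃ p, TauSeq tr τ B s t p ∧ tr p τ t' := by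
  induction h with
  | refl => exact Or.inl rfl
  | step ha hb _ ih =>
    rcases ih with rfl | ⟨p, hp, hpt⟩
    · exact Or.inr ⟨_, TauSeq.refl _, ha⟩
    · exact Or.inr ⟨p, TauSeq.step ha hb hp, hpt⟩

/-- Relational composition. -/
def BBComp (B1 B2 : S → S → Prop) : S → S → Prop := fun s u => ∃ t, B1 s t ∧ B2 t u

lemma bbisim_sim_path {B1 B2 : S → S → Prop} (hB2 : IsBranchingBisim tr τ B2)
    {s t tk u : S} (hst : B1 s t) (hseq : TauSeq tr τ B1 s t tk) (htu : B2 t u) :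
    ∃ uk, TauSeq tr τ (BBComp B1 B2) s u uk ∧ B2 tk uk := by
  induction hseq generalizing u with
  | refl t => exact ⟨u, TauSeq.refl u, htu⟩
  | step ha hb _ ih =>
    rcases (hB2 _ u htu).1 τ _ ha with ⟨_, h⟩ | ⟨uj, u1, hseq2, htr2, hb2⟩
    · exact ih hb h
    · obtain ⟨uk, hseqk, hbk⟩ := ih hb hb2
      refine ⟨uk, tauSeq_append
        (tauSeq_mono (fun v hv => ⟨_, hst, hv⟩) hseq2)
        (TauSeq.step htr2 ⟨_, hb, hb2⟩ hseqk), hbk⟩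

lemma bbcomp_half {B1 B2 : S → S → Prop} (hB1 : IsBranchingBisim tr τ B1)
    (hB2 : IsBranchingBisim tr τ B2)
    {s t u : S} (hst : B1 s t) (htu : B2 t u) {a : Act} {s' : S} (hmove : tr s a s') :
    (a = τ ∧ BBComp B1 B2 s' u) ∨
    ∃ uk u', TauSeq tr τ (BBComp B1 B2) s u uk ∧ tr uk a u' ∧ BBComp B1 B2 s' u' := by
  rcases (hB1 s t hst).1 a s' hmove with ⟨ha, hb⟩ | ⟨tk, t', hseq, htr, hb⟩
  · exact Or.inl ⟨ha, t, hb, htu⟩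
  · obtain ⟨uk, hseqk, hbk⟩ := bbisim_sim_path hB2 hst hseq htu
    have hstk : B1 s tk := tauSeq_last hst hseq
    rcases (hB2 tk uk hbk).1 a t' htr with ⟨ha, hb2⟩ | ⟨uj, u', hseq2, htr2, hb2⟩
    · rcases tauSeq_split_last hseqk with rfl | ⟨p, hp, hpt⟩
      · exact Or.inl ⟨ha, t', hb, hb2⟩
      · subst ha
        exact Or.inr ⟨p, uk, hp, hpt, t', hb, hb2⟩
    · exact Or.inr ⟨uj, u', tauSeq_append hseqk
        (tauSeq_mono (fun v hv => ⟨tk, hstk, hv⟩) hseq2), htr2, t', hb, hb2⟩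

lemma isbb_flip {B : S → S → Prop} (h : IsBranchingBisim tr τ B) :
    IsBranchingBisim tr τ (fun u v => B v u) := by
  intro s t hts
  constructor
  · intro a s' hm
    rcases (h t s hts).2 a s' hm with ⟨ha, hb⟩ | ⟨sk, s'', hseq, htr, hb⟩
    · exact Or.inl ⟨ha, hb⟩
    · exact Or.inr ⟨sk, s'', hseq, htr, hb⟩
  · intro a t' hm
    rcases (h t s hts).1 a t' hm with ⟨ha, hb⟩ | ⟨tk, t'', hseq, htr, hb⟩
    · exact Or.inl ⟨ha, hb⟩
    · exact Or.inr ⟨tk, t'', hseq, htr, hb⟩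

lemma bbcomp_isbb {B1 B2 : S → S → Prop} (h1 : IsBranchingBisim tr τ B1)
    (h2 : IsBranchingBisim tr τ B2) : IsBranchingBisim tr τ (BBComp B1 B2) := by
  rintro s u ⟨t, hst, htu⟩
  constructor
  · intro a s' hm
    exact bbcomp_half h1 h2 hst htu hm
  · intro a u' hm
    rcases bbcomp_half (isbb_flip h2) (isbb_flip h1) htu hst hm with
      ⟨ha, t', hb2, hb1⟩ | ⟨sk, s', hseq, htr, t', hb2, hb1⟩
    · exact Or.inl ⟨ha, t', hb1, hb2⟩
    · exact Or.inr ⟨sk, s', tauSeq_mono (fun v hv => ⟨hv.choose, hv.choose_spec.2, hv.choose_spec.1⟩) hseq,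
        htr, t', hb1, hb2⟩

lemma bbisim_refl' (s : S) : BBisim tr τ s s :=
  ⟨Eq, fun x y hxy => by
      subst hxy
      exact ⟨fun a s' h => Or.inr ⟨x, s', TauSeq.refl x, h, rfl⟩,
             fun a t' h => Or.inr ⟨x, t', TauSeq.refl x, h, rfl⟩⟩, rfl⟩

lemma bbisim_symm' {s t : S} (h : BBisim tr τ s t) : BBisim tr τ t s := by
  obtain ⟨B, hB, hst⟩ := h
  exact ⟨fun u v => B v u, isbb_flip hB, hst⟩

lemma bbisim_trans' {s t u : S} (h1 : BBisim tr τ s t) (h2 : BBisim tr τ t u) :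
    BBisim tr τ s u := by
  obtain ⟨B1, hB1, hst⟩ := h1
  obtain ⟨B2, hB2, htu⟩ := h2
  exact ⟨BBComp B1 B2, bbcomp_isbb hB1 hB2, t, hst, htu⟩

lemma tauSeq_tauNC {B : S → S → Prop} (hB : IsBranchingBisim tr τ B) {s t tk : S}
    (h0 : B s t) (h : TauSeq tr τ B s t tk) : TauNC tr τ t tk := by
  revert h0
  induction h with
  | refl => exact fun _ => TauNC.refl _
  | step ha hb _ ih =>
    exact fun h0 => TauNC.step ha
      (bbisim_trans' (bbisim_symm' ⟨B, hB, h0⟩) ⟨B, hB, hb⟩) (ih hb)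

end Aux

/-- if `s ~ t` and `s →a s'`, then either `a = τ` and the transition
is not class-changing (and then `s' ~ t`), or there is a path
`t = t₀ →τ ⋯ →τ t_k →a t'` with no class-changing transition in the τ-segment
(hence `t ~ t_k`), `s' ~ t'`, and the final transition `t_k →a t'` is
class-changing iff `s →a s'` is. -/
theorem bbisim_move_matching {S Act : Type} (tr : S → Act → S → Prop) (τ : Act)
    (s t s' : S) (a : Act) (h : BBisim tr τ s t) (hmove : tr s a s') :
    (a = τ ∧ BBisim tr τ s s' ∧ BBisim tr τ s' t) ∨
    (∃ tk t', TauNC tr τ t tk ∧ tr tk a t' ∧ BBisim tr τ t tk ∧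
      BBisim tr τ s' t' ∧ (¬ BBisim tr τ tk t' ↔ ¬ BBisim tr τ s s')) := by
  obtain ⟨B, hB, hst⟩ := h
  rcases (hB s t hst).1 a s' hmove with ⟨ha, hb⟩ | ⟨tk, t', hseq, htr, hb⟩
  · exact Or.inl ⟨ha, bbisim_trans' ⟨B, hB, hst⟩ (bbisim_symm' ⟨B, hB, hb⟩), ⟨B, hB, hb⟩⟩
  · have hstkB : BBisim tr τ s tk := ⟨B, hB, tauSeq_last hst hseq⟩
    have hs't'B : BBisim tr τ s' t' := ⟨B, hB, hb⟩
    refine Or.inr ⟨tk, t', tauSeq_tauNC hB hst hseq, htr,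
      bbisim_trans' (bbisim_symm' ⟨B, hB, hst⟩) hstkB, hs't'B, not_congr ?_⟩
    constructor
    · intro h1
      exact bbisim_trans' hstkB (bbisim_trans' h1 (bbisim_symm' hs't'B))
    · intro h2
      exact bbisim_trans' (bbisim_symm' hstkB) (bbisim_trans' h2 hs't'B)
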